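/- arXiv:1610.05221 — 6 statements merged into one kernel-verified Lean document; each statement's English description precedes it below -/
import Mathlib

section
/- Let μ be a Borel probability measure on the closed unit ball 𝔹^d ⊂ ℝ^d. Then either there exists a hyperplane H through the origin with μ(H ∩ 𝔹^d) = 1, or there exist constants c, p > 0 and disjoint measurable sets A_1, …, A_d ⊆ 𝔹^d such that (i) for every unit vector e there is some i ∈ [d] with |⟨x, e⟩| ≥ c for all x ∈ A_i, and (ii) μ(A_i) ≥ p for each i. -/
/-!
Let `ν` be `μ` restricted to the ball. If the support of `ν` does not span, it lies in a
hyperplane `H`, and `H` carries all the mass of `ν`. Otherwise the support contains a basis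
`b₁, …, b_d`. The map `e ↦ (⟪bᵢ, e⟫)ᵢ` is injective, hence bounded below in the sup norm on the
unit sphere: every unit vector `e` has some `|⟪bᵢ, e⟫| ≥ c`. Disjoint balls of radius at most
`c / 2` around the `bᵢ`, cut down to the unit ball, are the sets `Aᵢ`; they have positive mass
because the `bᵢ` lie in the support.
-/

open MeasureTheory Filter Topology Set Module Submodule Metric
open scoped RealInnerProductSpace

theorem Submodule.exists_le_finrank_eq_sub_one {K V : Type*} [Field K] [AddCommGroup V]
    [Module K V] [FiniteDimensional K V] {W : Submodule K V} (hW : W ≠ ⊤) :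
    ∃ H : Submodule K V, finrank K H = finrank K V - 1 ∧ W ≤ H := by
  obtain ⟨f, hf, hWf⟩ := W.exists_le_ker_of_lt_top hW.lt_top
  exact ⟨LinearMap.ker f, by rw [← Module.Dual.finrank_ker_add_one_of_ne_zero hf]; simp, hWf⟩

theorem Module.Basis.exists_range_subset_of_span_eq_top {K V : Type*} [DivisionRing K]
    [AddCommGroup V] [Module K V] [FiniteDimensional K V] {s : Set V} (hs : span K s = ⊤)
    {n : ℕ} (hn : finrank K V = n) : ∃ b : Basis (Fin n) K V, range b ⊆ s := by
  let b := Basis.ofSpan hs.ge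
  exact ⟨b.reindex (b.indexEquiv (finBasisOfFinrankEq K V hn)), by
    simpa only [Basis.range_reindex] using Basis.ofSpan_subset hs.ge⟩

section InnerProduct

variable {ι E : Type*} [Fintype ι] [NormedAddCommGroup E] [InnerProductSpace ℝ E]

theorem exists_pos_le_abs_inner_of_span_eq_top [FiniteDimensional ℝ E] {x : ι → E}
    (hx : span ℝ (range x) = ⊤) :
    ∃ c > 0, ∀ e : E, ‖e‖ = 1 → ∃ i, c ≤ |⟪x i, e⟫| := by
  let T : E →ₗ[ℝ] ι → ℝ := LinearMap.pi fun i => innerₛₗ ℝ (x i)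
  have hT : LinearMap.ker T = ⊥ := by
    refine LinearMap.ker_eq_bot'.2 fun e he => inner_self_eq_zero (𝕜 := ℝ) |>.1 ?_
    have : innerₛₗ ℝ e = 0 := LinearMap.ext_on_range hx fun i => by
      simpa [T, real_inner_comm] using congr_fun he i
    exact LinearMap.congr_fun this e
  obtain ⟨K, -, hK⟩ := T.exists_antilipschitzWith hT
  obtain ⟨c, hc, hcT⟩ := antilipschitzWith_iff_exists_mul_le_norm.1 ⟨K, hK⟩
  refine ⟨c, hc, fun e he => ?_⟩
  by_contra! hlt
  have hTe : ‖T e‖ < c := (pi_norm_lt_iff hc).2 fun i => by simpa [T] using hlt i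
  have hcTe := hcT e
  rw [he, mul_one] at hcTe
  exact hTe.not_ge hcTe

theorem abs_inner_le_abs_inner_add_dist (y z e : E) :
    |⟪y, e⟫| ≤ |⟪z, e⟫| + dist y z * ‖e‖ := by
  have hsub := abs_sub_abs_le_abs_sub ⟪y, e⟫ ⟪z, e⟫
  rw [← inner_sub_left] at hsub
  rw [dist_eq_norm]
  linarith [abs_real_inner_le_norm (y - z) e]

end InnerProduct

theorem eventually_pairwise_disjoint_closedBall {ι X : Type*} [Finite ι] [MetricSpace X]
    {x : ι → X} (hx : Function.Injective x) :
    ∀ᶠ r in 𝓝[>] (0 : ℝ),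
      Pairwise fun i j => Disjoint (closedBall (x i) r) (closedBall (x j) r) := by
  refine eventually_all.2 fun i => eventually_all.2 fun j => ?_
  rcases eq_or_ne i j with rfl | hij
  · exact .of_forall fun _ h => absurd rfl h
  have hpos : 0 < dist (x i) (x j) / 2 := half_pos (dist_pos.2 (hx.ne hij))
  filter_upwards [nhdsWithin_le_nhds (eventually_lt_nhds hpos)] with r hr _
  exact closedBall_disjoint_closedBall (by linarith)

theorem exists_separated_closedBall_of_basis {ι E : Type*} [Fintype ι] [NormedAddCommGroup E]
    [InnerProductSpace ℝ E] [FiniteDimensional ℝ E] [MeasurableSpace E] (ν : Measure E)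
    (b : Basis ι ℝ E) (hb : range b ⊆ ν.support) :
    ∃ c > 0, ∃ p > 0, ∃ r : ℝ,
      (Pairwise fun i j => Disjoint (closedBall (b i) r) (closedBall (b j) r)) ∧
      (∀ e : E, ‖e‖ = 1 → ∃ i, ∀ y ∈ closedBall (b i) r, c ≤ |⟪y, e⟫|) ∧
      ∀ i, ENNReal.ofReal p ≤ ν (closedBall (b i) r) := by
  obtain ⟨c, hc, hbc⟩ := exists_pos_le_abs_inner_of_span_eq_top b.span_eq
  obtain ⟨r, ⟨hr, hrc⟩, hdisj⟩ := ((eventually_mem_nhdsWithin.and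
    (nhdsWithin_le_nhds (eventually_le_nhds (half_pos hc)))).and
    (eventually_pairwise_disjoint_closedBall b.injective)).exists
  have hpos : ∀ i, 0 < ν (closedBall (b i) r) := fun i =>
    (Measure.mem_support_iff_forall _).1 (hb ⟨i, rfl⟩) _ (closedBall_mem_nhds _ hr)
  have hofReal : Tendsto ENNReal.ofReal (𝓝[>] 0) (𝓝 0) := by
    simpa using (ENNReal.continuous_ofReal.tendsto 0).mono_left nhdsWithin_le_nhds
  obtain ⟨p, hp, hpν⟩ := (eventually_mem_nhdsWithin.and
    (eventually_all.2 fun i => hofReal.eventually (gt_mem_nhds (hpos i)))).exists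
  refine ⟨c / 2, half_pos hc, p, hp, r, hdisj, fun e he => ?_, fun i => (hpν i).le⟩
  obtain ⟨i, hi⟩ := hbc e he
  refine ⟨i, fun y hy => ?_⟩
  have hshift := abs_inner_le_abs_inner_add_dist (b i) y e
  rw [he, mul_one, dist_comm] at hshift
  linarith [mem_closedBall.1 hy]

theorem decomposition_general (d : ℕ)
    (μ : Measure (EuclideanSpace ℝ (Fin d)))
    (hsupp : μ {x : EuclideanSpace ℝ (Fin d) | ‖x‖ ≤ 1} = 1) :
    (∃ H : Submodule ℝ (EuclideanSpace ℝ (Fin d)), Module.finrank ℝ H = d - 1 ∧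
        μ ((H : Set (EuclideanSpace ℝ (Fin d))) ∩ {x | ‖x‖ ≤ 1}) = 1) ∨
    (∃ c p : ℝ, 0 < c ∧ 0 < p ∧
      ∃ A : Fin d → Set (EuclideanSpace ℝ (Fin d)),
        (∀ i, MeasurableSet (A i)) ∧
        (∀ i, A i ⊆ {x | ‖x‖ ≤ 1}) ∧
        (Pairwise fun i j => Disjoint (A i) (A j)) ∧
        (∀ e : EuclideanSpace ℝ (Fin d), ‖e‖ = 1 →
          ∃ i, ∀ x ∈ A i, c ≤ abs ⟪x, e⟫) ∧
        (∀ i, ENNReal.ofReal p ≤ μ (A i))) := by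
  set B : Set (EuclideanSpace ℝ (Fin d)) := {x | ‖x‖ ≤ 1}
  have hB : MeasurableSet B := measurableSet_le measurable_norm measurable_const
  set ν := μ.restrict B
  by_cases hspan : span ℝ ν.support = ⊤
  · right
    obtain ⟨b, hb⟩ := Basis.exists_range_subset_of_span_eq_top hspan finrank_euclideanSpace_fin
    obtain ⟨c, hc, p, hp, r, hdisj, hsep, hmass⟩ := exists_separated_closedBall_of_basis ν b hb
    refine ⟨c, p, hc, hp, fun i => closedBall (b i) r ∩ B,
      fun i => measurableSet_closedBall.inter hB, fun i => inter_subset_right,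
      fun i j hij => (hdisj hij).mono inter_subset_left inter_subset_left, fun e he => ?_,
      fun i => ?_⟩
    · obtain ⟨i, hi⟩ := hsep e he
      exact ⟨i, fun y hy => hi y hy.1⟩
    · simpa only [ν, Measure.restrict_apply measurableSet_closedBall] using hmass i
  · left
    obtain ⟨H, hH, hle⟩ := Submodule.exists_le_finrank_eq_sub_one hspan
    refine ⟨H, by rwa [finrank_euclideanSpace_fin] at hH, ?_⟩
    have hHc : ν (H : Set (EuclideanSpace ℝ (Fin d)))ᶜ = 0 :=
      measure_mono_null (compl_subset_compl.2 (subset_span.trans hle)) ν.measure_compl_support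
    rw [← hsupp, ← Measure.restrict_apply' hB, measure_congr (ae_eq_univ.2 hHc),
      Measure.restrict_apply_univ]

theorem decomposition (d : ℕ) (hd : 1 ≤ d)
    (μ : Measure (EuclideanSpace ℝ (Fin d))) [IsProbabilityMeasure μ]
    (hsupp : μ {x : EuclideanSpace ℝ (Fin d) | ‖x‖ ≤ 1} = 1) :
    (∃ H : Submodule ℝ (EuclideanSpace ℝ (Fin d)), Module.finrank ℝ H = d - 1 ∧
        μ ((H : Set (EuclideanSpace ℝ (Fin d))) ∩ {x | ‖x‖ ≤ 1}) = 1) ∨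
    (∃ c p : ℝ, 0 < c ∧ 0 < p ∧
      ∃ A : Fin d → Set (EuclideanSpace ℝ (Fin d)),
        (∀ i, MeasurableSet (A i)) ∧
        (∀ i, A i ⊆ {x | ‖x‖ ≤ 1}) ∧
        (Pairwise fun i j => Disjoint (A i) (A j)) ∧
        (∀ e : EuclideanSpace ℝ (Fin d), ‖e‖ = 1 →
          ∃ i, ∀ x ∈ A i, c ≤ abs ⟪x, e⟫) ∧
        (∀ i, ENNReal.ofReal p ≤ μ (A i))) :=
  decomposition_general d μ hsupp
end

section
/- Let B_1, …, B_k ∈ ℝ^d, let V ∈ ℝ^d with ‖V‖ ≤ 1, and suppose V is assigned to bin h ∈ [k] so that the new vectors are B'_i = B_i + V·1_{i = h}. Writing δ(i,j) = B_i − B_j, δ'(i,j) = B'_i − B'_j, S = Σ_{i<j} ‖δ(i,j)‖², S' = Σ_{i<j} ‖δ'(i,j)‖², and assuming ⟨V, B_h⟩ ≤ ⟨V, B_i⟩ for all i (the inner product rule), one has S' − S ≤ (k−1) − 2 Σ_{i ≠ h} ‖δ(h,i)‖·|⟨V, e(h,i)⟩|, where e(h,i) is the unit vector in the direction of δ(h,i)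 (interpreted as 0 when δ(h,i) = 0). -/
open scoped RealInnerProductSpace

theorem observable_step (d k : ℕ) (hk : 2 ≤ k)
    (B : Fin k → EuclideanSpace ℝ (Fin d))
    (V : EuclideanSpace ℝ (Fin d)) (hV : ‖V‖ ≤ 1) (h : Fin k)
    (hrule : ∀ i, ⟪V, B h⟫ ≤ ⟪V, B i⟫)
    (B' : Fin k → EuclideanSpace ℝ (Fin d))
    (hB' : ∀ i, B' i = if i = h then B i + V else B i) :
    (∑ p ∈ Finset.univ.filter (fun p : Fin k × Fin k => p.1 < p.2),
        ‖B' p.1 - B' p.2‖ ^ 2) -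
      (∑ p ∈ Finset.univ.filter (fun p : Fin k × Fin k => p.1 < p.2),
        ‖B p.1 - B p.2‖ ^ 2) ≤
    (k - 1 : ℝ) - 2 * ∑ i ∈ Finset.univ.erase h,
      ‖B h - B i‖ * abs ⟪V, ‖B h - B i‖⁻¹ • (B h - B i)⟫ := by
  classical
  set P := Finset.univ.filter (fun p : Fin k × Fin k => p.1 < p.2) with hP
  set g : Fin k × Fin k → ℝ := fun p => ‖B' p.1 - B' p.2‖ ^ 2 - ‖B p.1 - B p.2‖ ^ 2 with hg
  have hsub : (∑ p ∈ P, ‖B' p.1 - B' p.2‖ ^ 2) - ∑ p ∈ P, ‖B p.1 - B p.2‖ ^ 2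
      = ∑ p ∈ P, g p := by
    rw [← Finset.sum_sub_distrib]
  -- g vanishes off pairs containing h
  have hg0 : ∀ p ∈ P, g p ≠ 0 → p.1 = h ∨ p.2 = h := by
    intro p _ hne
    by_contra hc
    push_neg at hc
    apply hne
    simp only [hg, hB' p.1, hB' p.2, if_neg hc.1, if_neg hc.2, sub_self]
  have hfilter : ∑ p ∈ P, g p
      = ∑ p ∈ P.filter (fun p => p.1 = h ∨ p.2 = h), g p :=
    (Finset.sum_filter_of_ne hg0).symm
  -- reindex by the other coordinate
  have hreindex : ∑ i ∈ Finset.univ.erase h,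
      (‖V‖ ^ 2 + 2 * ⟪V, B h - B i⟫)
      = ∑ p ∈ P.filter (fun p => p.1 = h ∨ p.2 = h), g p := by
    refine Finset.sum_nbij' (fun i => if h < i then (h, i) else (i, h))
      (fun p => if p.1 = h then p.2 else p.1) ?_ ?_ ?_ ?_ ?_
    · intro a ha
      have hne : a ≠ h := Finset.ne_of_mem_erase ha
      by_cases hlt : h < a
      · simp [P, hlt]
      · have : a < h := lt_of_le_of_ne (not_lt.mp hlt) hne
        simp [P, hlt, this]
    · intro p hp
      simp only [Finset.mem_filter, hP, Finset.mem_univ, true_and] at hp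
      obtain ⟨hlt, hor⟩ := hp
      rcases hor with h1 | h2
      · simp only [if_pos h1]
        exact Finset.mem_erase.mpr ⟨fun e => absurd (h1 ▸ e ▸ hlt) (lt_irrefl _), Finset.mem_univ _⟩
      · have hne : p.1 ≠ h := fun e => absurd (h2 ▸ e ▸ hlt) (lt_irrefl _)
        simp only [if_neg hne]
        exact Finset.mem_erase.mpr ⟨hne, Finset.mem_univ _⟩
    · intro a ha
      by_cases hlt : h < a
      · simp [hlt]
      · simp [hlt, Finset.ne_of_mem_erase ha]
    · intro p hp
      simp only [Finset.mem_filter, hP, Finset.mem_univ, true_and] at hp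
      obtain ⟨hlt, hor⟩ := hp
      rcases hor with h1 | h2
      · have : h < p.2 := h1 ▸ hlt
        simp [h1, this]
        exact (Prod.ext h1.symm rfl)
      · have hne : p.1 ≠ h := fun e => absurd (h2 ▸ e ▸ hlt) (lt_irrefl _)
        have : ¬ h < p.1 := by
          rw [← h2]; exact not_lt.mpr (le_of_lt hlt)
        simp [hne, this]
        exact (Prod.ext rfl h2.symm)
    · intro a ha
      have hne : a ≠ h := Finset.ne_of_mem_erase ha
      have key : ‖B h + V - B a‖ ^ 2 - ‖B h - B a‖ ^ 2
          = ‖V‖ ^ 2 + 2 * ⟪V, B h - B a⟫ := by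
        have : B h + V - B a = (B h - B a) + V := by abel
        rw [this, norm_add_sq_real, real_inner_comm]
        ring
      by_cases hlt : h < a
      · simp only [if_pos hlt, hg]
        rw [hB' h, hB' a, if_neg hne, if_pos rfl]
        exact key.symm
      · simp only [if_neg hlt, hg]
        rw [hB' h, hB' a, if_neg hne, if_pos rfl, ← key]
        have e1 : B a - (B h + V) = -(B h + V - B a) := by abel
        rw [e1, norm_neg, ← norm_neg (B a - B h)]
        congr 2
        abel
  -- each term bound
  have hterm : ∀ i ∈ Finset.univ.erase h,
      ‖V‖ ^ 2 + 2 * ⟪V, B h - B i⟫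
        ≤ 1 - 2 * (‖B h - B i‖ * |⟪V, ‖B h - B i‖⁻¹ • (B h - B i)⟫|) := by
    intro i _
    have h1 : ‖V‖ ^ 2 ≤ 1 := by nlinarith [norm_nonneg V]
    have h2 : ⟪V, B h - B i⟫ ≤ 0 := by
      rw [inner_sub_right]
      linarith [hrule i]
    have h3 : ‖B h - B i‖ * |⟪V, ‖B h - B i‖⁻¹ • (B h - B i)⟫| = |⟪V, B h - B i⟫| := by
      by_cases hz : B h - B i = 0
      · simp [hz]
      · have hn : ‖B h - B i‖ ≠ 0 := norm_ne_zero_iff.mpr hz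
        rw [real_inner_smul_right, abs_mul, abs_of_nonneg (inv_nonneg.mpr (norm_nonneg _))]
        field_simp
    rw [h3]
    have := abs_of_nonpos h2
    linarith [abs_nonneg (⟪V, B h - B i⟫ : ℝ)]
  rw [hsub, hfilter, ← hreindex]
  calc ∑ i ∈ Finset.univ.erase h, (‖V‖ ^ 2 + 2 * ⟪V, B h - B i⟫)
      ≤ ∑ i ∈ Finset.univ.erase h,
          (1 - 2 * (‖B h - B i‖ * |⟪V, ‖B h - B i‖⁻¹ • (B h - B i)⟫|)) :=
        Finset.sum_le_sum hterm
    _ = (k - 1 : ℝ) - 2 * ∑ i ∈ Finset.univ.erase h,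
          ‖B h - B i‖ * |⟪V, ‖B h - B i‖⁻¹ • (B h - B i)⟫| := by
        rw [Finset.sum_sub_distrib, Finset.sum_const,
          Finset.card_erase_of_mem (Finset.mem_univ h), Finset.card_univ, Fintype.card_fin,
          ← Finset.mul_sum, nsmul_eq_mul, mul_one,
          Nat.cast_sub (by omega : 1 ≤ k), Nat.cast_one]
end

section
/- Under the inner product rule, the observable increases by at most k−1 at each step: if B_1, …, B_k ∈ ℝ^d, ‖V‖ ≤ 1, V is added to the bin h minimizing ⟨V, B_h⟩, and S, S' denote Σ_{i<j}‖B_i − B_j‖² before and after, then S' ≤ S + (k−1). -/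
/-! Only the `k - 1` pairs containing the chosen bin `h` change. For such a pair the squared
distance grows by `2⟪B h - B j, V⟫ + ‖V‖²`, and the rule makes the inner product nonpositive,
so each of these pairs grows by at most `‖V‖² ≤ 1`. -/

open scoped RealInnerProductSpace

open Finset

section AddToMinimalBin

variable {E : Type*} [NormedAddCommGroup E] [InnerProductSpace ℝ E]

theorem norm_add_sq_le_of_inner_nonpos {x v : E} (hxv : ⟪x, v⟫ ≤ 0) :
    ‖x + v‖ ^ 2 ≤ ‖x‖ ^ 2 + ‖v‖ ^ 2 := by
  rw [norm_add_sq_real]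
  linarith

variable {ι : Type*} {B B' : ι → E} {V : E} {h : ι}

theorem norm_sub_sq_le_after_add_to_min_bin (hV : ‖V‖ ≤ 1)
    (hrule : ∀ i, ⟪V, B h⟫ ≤ ⟪V, B i⟫) (j : ι) :
    ‖B h + V - B j‖ ^ 2 ≤ ‖B h - B j‖ ^ 2 + 1 := by
  have hinner : ⟪B h - B j, V⟫ ≤ 0 := by
    rw [inner_sub_left, real_inner_comm V (B h), real_inner_comm V (B j)]
    linarith [hrule j]
  have hV2 : ‖V‖ ^ 2 ≤ 1 := pow_le_one₀ (norm_nonneg V) hV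
  calc ‖B h + V - B j‖ ^ 2 = ‖B h - B j + V‖ ^ 2 := by rw [sub_add_eq_add_sub]
    _ ≤ ‖B h - B j‖ ^ 2 + ‖V‖ ^ 2 := norm_add_sq_le_of_inner_nonpos hinner
    _ ≤ ‖B h - B j‖ ^ 2 + 1 := by gcongr

theorem norm_sub_sq_le_of_add_to_min_bin [DecidableEq ι] (hV : ‖V‖ ≤ 1)
    (hrule : ∀ i, ⟪V, B h⟫ ≤ ⟪V, B i⟫)
    (hB' : ∀ i, B' i = if i = h then B i + V else B i) {i j : ι} (hij : i ≠ j) :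
    ‖B' i - B' j‖ ^ 2 ≤ ‖B i - B j‖ ^ 2 + if i = h ∨ j = h then 1 else 0 := by
  rw [hB' i, hB' j]
  by_cases hi : i = h
  · subst hi
    simpa [Ne.symm hij] using norm_sub_sq_le_after_add_to_min_bin hV hrule j
  by_cases hj : j = h
  · subst hj
    simpa [hij, norm_sub_rev (B i)] using norm_sub_sq_le_after_add_to_min_bin hV hrule i
  · simp [hi, hj]

end AddToMinimalBin

theorem Fin.card_lt_pairs_incident {k : ℕ} (h : Fin k) :
    #{p ∈ univ.filter (fun p : Fin k × Fin k => p.1 < p.2) | p.1 = h ∨ p.2 = h} = k - 1 := by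
  have hsplit : {p ∈ univ.filter (fun p : Fin k × Fin k => p.1 < p.2) | p.1 = h ∨ p.2 = h} =
      (Iio h).map (Function.Embedding.sectL (Fin k) h) ∪
        (Ioi h).map (Function.Embedding.sectR h (Fin k)) := by
    ext ⟨a, b⟩
    simp only [mem_filter, mem_univ, true_and, mem_union, mem_map, mem_Iio, mem_Ioi,
      Function.Embedding.sectL_apply, Function.Embedding.sectR_apply, Prod.mk.injEq]
    grind
  have hdisj : Disjoint ((Iio h).map (Function.Embedding.sectL (Fin k) h))
      ((Ioi h).map (Function.Embedding.sectR h (Fin k))) := by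
    simp only [disjoint_left, mem_map, mem_Iio, mem_Ioi, Function.Embedding.sectL_apply,
      Function.Embedding.sectR_apply]
    grind
  rw [hsplit, card_union_of_disjoint hdisj, card_map, card_map, Fin.card_Iio, Fin.card_Ioi]
  omega

theorem observable_increase_bound_general (d k : ℕ)
    (B : Fin k → EuclideanSpace ℝ (Fin d))
    (V : EuclideanSpace ℝ (Fin d)) (hV : ‖V‖ ≤ 1) (h : Fin k)
    (hrule : ∀ i, ⟪V, B h⟫ ≤ ⟪V, B i⟫)
    (B' : Fin k → EuclideanSpace ℝ (Fin d))
    (hB' : ∀ i, B' i = if i = h then B i + V else B i) :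
    (∑ p ∈ Finset.univ.filter (fun p : Fin k × Fin k => p.1 < p.2),
        ‖B' p.1 - B' p.2‖ ^ 2) ≤
      (∑ p ∈ Finset.univ.filter (fun p : Fin k × Fin k => p.1 < p.2),
        ‖B p.1 - B p.2‖ ^ 2) + (k - 1 : ℝ) := by
  set P := univ.filter (fun p : Fin k × Fin k => p.1 < p.2)
  calc ∑ p ∈ P, ‖B' p.1 - B' p.2‖ ^ 2
      ≤ ∑ p ∈ P, (‖B p.1 - B p.2‖ ^ 2 + if p.1 = h ∨ p.2 = h then 1 else 0) :=
        sum_le_sum fun p hp => norm_sub_sq_le_of_add_to_min_bin hV hrule hB'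
          (mem_filter.mp hp).2.ne
    _ = ∑ p ∈ P, ‖B p.1 - B p.2‖ ^ 2 + (k - 1 : ℝ) := by
        rw [sum_add_distrib, sum_boole, Fin.card_lt_pairs_incident,
          Nat.cast_sub (Nat.one_le_of_lt h.isLt), Nat.cast_one]

theorem observable_increase_bound (d k : ℕ) (hk : 2 ≤ k)
    (B : Fin k → EuclideanSpace ℝ (Fin d))
    (V : EuclideanSpace ℝ (Fin d)) (hV : ‖V‖ ≤ 1) (h : Fin k)
    (hrule : ∀ i, ⟪V, B h⟫ ≤ ⟪V, B i⟫)
    (B' : Fin k → EuclideanSpace ℝ (Fin d))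
    (hB' : ∀ i, B' i = if i = h then B i + V else B i) :
    (∑ p ∈ Finset.univ.filter (fun p : Fin k × Fin k => p.1 < p.2),
        ‖B' p.1 - B' p.2‖ ^ 2) ≤
      (∑ p ∈ Finset.univ.filter (fun p : Fin k × Fin k => p.1 < p.2),
        ‖B p.1 - B p.2‖ ^ 2) + (k - 1 : ℝ) :=
  observable_increase_bound_general d k B V hV h hrule B' hB'
end

section
/- Let B_1, …, B_k ∈ ℝ^d and V with ‖V‖ ≤ 1, and suppose V is added to the bin h minimizing ⟨V, B_h⟩. Write δ(i,j) = B_i − B_j, S = Σ_{i<j}‖δ(i,j)‖², S' for the value after the update, and e(i,j) for the unit vector along δ(i,j). If S > 0 and |⟨V, e(i,j)⟩| ≥ k²/√S for all i ≠ j with δ(i,j) ≠ 0, then S' − S < −k. -/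
/-!
Only the distances from the moved bin `h` change: adding `V` to `B h` changes `S` by
`∑_{j ≠ h} (‖V‖² + 2⟪V, B h - B j⟫)`. Since `h` minimises `⟪V, ·⟫`, each inner product equals
`-‖B h - B j‖ |⟪V, e(j,h)⟫| ≤ -(k² / √S) ‖B h - B j‖`, so `S' - S ≤ (k - 1) - 2 (k² / √S) T` with
`T = ∑_j ‖B h - B j‖`. By the triangle inequality through `B h` every pairwise distance is at most
`T`, hence `√S ≤ k T`, and the bound becomes `S' - S ≤ (k - 1) - 2k < -k`.
-/

open scoped RealInnerProductSpace
open Finset Function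

theorem Finset.two_mul_sum_filter_fst_lt_snd {ι R : Type*} [Fintype ι] [LinearOrder ι]
    [NonAssocSemiring R] (f : ι → ι → R) (hsymm : ∀ i j, f i j = f j i) (hdiag : ∀ i, f i i = 0) :
    2 * ∑ p ∈ univ.filter (fun p : ι × ι => p.1 < p.2), f p.1 p.2 = ∑ i, ∑ j, f i j := by
  have hsplit : ∀ i j, f i j = (if i < j then f i j else 0) + (if j < i then f j i else 0) := by
    intro i j
    rcases lt_trichotomy i j with hij | rfl | hij
    · simp [hij, hij.not_gt]
    · simp [hdiag]
    · simp [hij, hij.not_gt, hsymm i j]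
  calc 2 * ∑ p ∈ univ.filter (fun p : ι × ι => p.1 < p.2), f p.1 p.2
      = ∑ p : ι × ι, (if p.1 < p.2 then f p.1 p.2 else 0)
        + ∑ p : ι × ι, (if p.1 < p.2 then f p.1 p.2 else 0) := by rw [two_mul, sum_filter]
    _ = ∑ p : ι × ι, (if p.1 < p.2 then f p.1 p.2 else 0)
        + ∑ p : ι × ι, (if p.2 < p.1 then f p.2 p.1 else 0) :=
      congrArg _ (Fintype.sum_equiv (Equiv.prodComm ι ι) _ _ fun _ => rfl).symm
    _ = ∑ p : ι × ι, f p.1 p.2 := by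
      rw [← sum_add_distrib]; exact Fintype.sum_congr _ _ fun p => (hsplit p.1 p.2).symm
    _ = ∑ i, ∑ j, f i j := Fintype.sum_prod_type _

theorem Finset.sum_sum_eq_two_mul_sum_erase_add {ι R : Type*} [Fintype ι] [DecidableEq ι]
    [NonAssocSemiring R] (g : ι → ι → R) (h : ι) (hsymm : ∀ i j, g i j = g j i)
    (hoff : ∀ i j, i ≠ h → j ≠ h → g i j = 0) :
    ∑ i, ∑ j, g i j = 2 * ∑ j ∈ univ.erase h, g h j + g h h := by
  have hrow : ∀ i ∈ univ.erase h, ∑ j, g i j = g h i := fun i hi => by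
    rw [sum_eq_single h (fun j _ hj => hoff i j (ne_of_mem_erase hi) hj) (by simp),
      hsymm]
  rw [← add_sum_erase univ _ (mem_univ h), sum_congr rfl hrow,
    ← add_sum_erase univ (g h) (mem_univ h), two_mul]
  abel

section PairwiseDistances

variable {ι E : Type*} [Fintype ι] [LinearOrder ι] [NormedAddCommGroup E]

def sumPairwiseSqDist (x : ι → E) : ℝ :=
  ∑ p ∈ univ.filter (fun p : ι × ι => p.1 < p.2), ‖x p.1 - x p.2‖ ^ 2

theorem two_mul_sumPairwiseSqDist (x : ι → E) :
    2 * sumPairwiseSqDist x = ∑ i, ∑ j, ‖x i - x j‖ ^ 2 :=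
  two_mul_sum_filter_fst_lt_snd (fun i j => ‖x i - x j‖ ^ 2) (fun i j => by rw [norm_sub_rev])
    (fun i => by simp)

theorem norm_sub_le_sum_norm_sub (x : ι → E) (h : ι) {i j : ι} (hij : i ≠ j) :
    ‖x i - x j‖ ≤ ∑ l, ‖x h - x l‖ :=
  calc ‖x i - x j‖ ≤ ‖x h - x i‖ + ‖x h - x j‖ := by
        rw [norm_sub_rev (x h) (x i)]; exact norm_sub_le_norm_sub_add_norm_sub _ _ _
    _ = ∑ l ∈ {i, j}, ‖x h - x l‖ := (sum_pair (f := fun l => ‖x h - x l‖) hij).symm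
    _ ≤ ∑ l, ‖x h - x l‖ := sum_le_univ_sum_of_nonneg fun _ => norm_nonneg _

theorem sqrt_sumPairwiseSqDist_le (x : ι → E) (h : ι) :
    √(sumPairwiseSqDist x) ≤ Fintype.card ι * ∑ l, ‖x h - x l‖ := by
  set T := ∑ l, ‖x h - x l‖
  have hT : 0 ≤ T := sum_nonneg fun _ _ => norm_nonneg _
  have hcard : ((univ.filter (fun p : ι × ι => p.1 < p.2)).card : ℝ) ≤ (Fintype.card ι) ^ 2 := by
    have := card_filter_le (univ : Finset (ι × ι)) (fun p => p.1 < p.2)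
    rw [card_univ, Fintype.card_prod] at this
    exact_mod_cast this.trans_eq (sq _).symm
  rw [Real.sqrt_le_left (by positivity)]
  calc sumPairwiseSqDist x ≤ ∑ _p ∈ univ.filter (fun p : ι × ι => p.1 < p.2), T ^ 2 :=
        sum_le_sum fun p hp => pow_le_pow_left₀ (norm_nonneg _)
          (norm_sub_le_sum_norm_sub x h (mem_filter.1 hp).2.ne) 2
    _ ≤ (Fintype.card ι) ^ 2 * T ^ 2 := by
        rw [sum_const, nsmul_eq_mul]; gcongr
    _ = (Fintype.card ι * T) ^ 2 := by ring

variable [InnerProductSpace ℝ E]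

theorem sumPairwiseSqDist_update_add_sub (x : ι → E) (h : ι) (v : E) :
    sumPairwiseSqDist (update x h (x h + v)) - sumPairwiseSqDist x
      = ∑ j ∈ univ.erase h, (‖v‖ ^ 2 + 2 * ⟪v, x h - x j⟫) := by
  set x' := update x h (x h + v)
  have hrow : ∀ j ∈ univ.erase h,
      ‖x' h - x' j‖ ^ 2 - ‖x h - x j‖ ^ 2 = ‖v‖ ^ 2 + 2 * ⟪v, x h - x j⟫ := fun j hj => by
    simp only [x', update_self, update_of_ne (ne_of_mem_erase hj)]
    rw [add_sub_right_comm, norm_add_sq_real, real_inner_comm]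
    ring
  have hdouble := sum_sum_eq_two_mul_sum_erase_add
    (fun i j => ‖x' i - x' j‖ ^ 2 - ‖x i - x j‖ ^ 2) h
    (fun i j => by simp only [norm_sub_rev (x' i), norm_sub_rev (x i)])
    (fun i j hi hj => by simp only [x', update_of_ne hi, update_of_ne hj, sub_self])
  simp only [sub_self, norm_zero, sum_congr rfl hrow] at hdouble
  rw [← mul_right_inj' (two_ne_zero' ℝ), mul_sub, two_mul_sumPairwiseSqDist,
    two_mul_sumPairwiseSqDist, ← sum_sub_distrib]
  simp only [← sum_sub_distrib]
  linear_combination hdouble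

theorem mul_norm_le_inner_of_le_abs_inner_normalize {v w : E} {c : ℝ}
    (hc : w ≠ 0 → c ≤ |⟪v, ‖w‖⁻¹ • w⟫|) (hvw : 0 ≤ ⟪v, w⟫) : c * ‖w‖ ≤ ⟪v, w⟫ := by
  rcases eq_or_ne w 0 with rfl | hw
  · simp
  have hw' : 0 < ‖w‖ := norm_pos_iff.2 hw
  have := hc hw
  rw [real_inner_smul_right, abs_of_nonneg (by positivity), inv_mul_eq_div,
    le_div_iff₀ hw'] at this
  exact this

theorem sumPairwiseSqDist_update_add_sub_le (x : ι → E) (h : ι) {v : E} (hv : ‖v‖ ≤ 1)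
    (hmin : ∀ j, ⟪v, x h⟫ ≤ ⟪v, x j⟫) (c : ℝ)
    (hc : ∀ j, j ≠ h → x j - x h ≠ 0 → c ≤ |⟪v, ‖x j - x h‖⁻¹ • (x j - x h)⟫|) :
    sumPairwiseSqDist (update x h (x h + v)) - sumPairwiseSqDist x
      ≤ (Fintype.card ι - 1) - 2 * c * ∑ l, ‖x h - x l‖ := by
  have hterm : ∀ j ∈ univ.erase h,
      ‖v‖ ^ 2 + 2 * ⟪v, x h - x j⟫ ≤ 1 - 2 * c * ‖x h - x j‖ := fun j hj => by
    have hvj := mul_norm_le_inner_of_le_abs_inner_normalize (hc j (ne_of_mem_erase hj))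
      (by rw [inner_sub_right]; exact sub_nonneg.2 (hmin j))
    rw [norm_sub_rev, ← neg_sub, inner_neg_right]
    nlinarith [norm_nonneg v]
  have hcard : ((univ.erase h).card : ℝ) = Fintype.card ι - 1 := by
    rw [card_erase_of_mem (mem_univ h), card_univ,
      Nat.cast_pred (Fintype.card_pos_iff.2 ⟨h⟩)]
  rw [sumPairwiseSqDist_update_add_sub,
    ← sum_erase (f := fun l => ‖x h - x l‖) (a := h) univ (by simp)]
  calc _ ≤ ∑ j ∈ univ.erase h, (1 - 2 * c * ‖x h - x j‖) := sum_le_sum hterm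
    _ = _ := by rw [sum_sub_distrib, sum_const, nsmul_one, hcard, mul_sum]

end PairwiseDistances

theorem observable_decrease_general (d k : ℕ)
    (B : Fin k → EuclideanSpace ℝ (Fin d))
    (V : EuclideanSpace ℝ (Fin d)) (hV : ‖V‖ ≤ 1) (h : Fin k)
    (hrule : ∀ i, ⟪V, B h⟫ ≤ ⟪V, B i⟫)
    (B' : Fin k → EuclideanSpace ℝ (Fin d))
    (hB' : ∀ i, B' i = if i = h then B i + V else B i)
    (S S' : ℝ)
    (hS : S = ∑ p ∈ Finset.univ.filter (fun p : Fin k × Fin k => p.1 < p.2),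
        ‖B p.1 - B p.2‖ ^ 2)
    (hS' : S' = ∑ p ∈ Finset.univ.filter (fun p : Fin k × Fin k => p.1 < p.2),
        ‖B' p.1 - B' p.2‖ ^ 2)
    (hSpos : 0 < S)
    (hip : ∀ i j : Fin k, i ≠ j → B i - B j ≠ 0 →
      (k : ℝ) ^ 2 / Real.sqrt S ≤ abs ⟪V, ‖B i - B j‖⁻¹ • (B i - B j)⟫) :
    S' - S < -(k : ℝ) := by
  have hB'eq : B' = update B h (B h + V) := funext fun i => by
    rw [hB', update_apply]; split_ifs with hi <;> simp [hi]
  have hS : S = sumPairwiseSqDist B := hS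
  have hS' : S' = sumPairwiseSqDist (update B h (B h + V)) := hB'eq ▸ hS'
  set T := ∑ l, ‖B h - B l‖
  have hstep := sumPairwiseSqDist_update_add_sub_le B h hV hrule _ fun j hj => hip j h hj
  have hsqrt := sqrt_sumPairwiseSqDist_le B h
  rw [Fintype.card_fin, ← hS, ← hS'] at hstep
  rw [Fintype.card_fin, ← hS] at hsqrt
  have hsqrt_pos : 0 < √S := Real.sqrt_pos.2 hSpos
  have hk_le : (k : ℝ) ≤ (k : ℝ) ^ 2 / √S * T := by
    rw [div_mul_eq_mul_div, le_div_iff₀ hsqrt_pos]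
    nlinarith [Nat.cast_nonneg (α := ℝ) k]
  linarith

theorem observable_decrease (d k : ℕ) (hk : 2 ≤ k)
    (B : Fin k → EuclideanSpace ℝ (Fin d))
    (V : EuclideanSpace ℝ (Fin d)) (hV : ‖V‖ ≤ 1) (h : Fin k)
    (hrule : ∀ i, ⟪V, B h⟫ ≤ ⟪V, B i⟫)
    (B' : Fin k → EuclideanSpace ℝ (Fin d))
    (hB' : ∀ i, B' i = if i = h then B i + V else B i)
    (S S' : ℝ)
    (hS : S = ∑ p ∈ Finset.univ.filter (fun p : Fin k × Fin k => p.1 < p.2),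
        ‖B p.1 - B p.2‖ ^ 2)
    (hS' : S' = ∑ p ∈ Finset.univ.filter (fun p : Fin k × Fin k => p.1 < p.2),
        ‖B' p.1 - B' p.2‖ ^ 2)
    (hSpos : 0 < S)
    (hip : ∀ i j : Fin k, i ≠ j → B i - B j ≠ 0 →
      (k : ℝ) ^ 2 / Real.sqrt S ≤ abs ⟪V, ‖B i - B j‖⁻¹ • (B i - B j)⟫) :
    S' - S < -(k : ℝ) :=
  observable_decrease_general d k B V hV h hrule B' hB' S S' hS hS' hSpos hip
end

section
/- Let μ be the uniform probability distribution on the closed unit ball 𝔹^d ⊂ ℝ^d with d ≥ 2. There is a constant c_d > 0 (depending only on d) such that for every nonzero δ ∈ ℝ^d with ‖δ‖ ≥ 1, if V is sampled from μ then ℙ(‖V‖ ≥ 3/4 and |⟨V, δ/‖δ‖⟩| ≤ 1/(8‖δ‖)) ≥ c_d/‖δ‖. -/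
/-!
Put `u = δ / ‖δ‖`, `s = 1 / ‖δ‖`, and pick `w ⊥ u` with `‖w‖ = 7 / 8`, which is possible because
`d ≥ 2`. The linear map that compresses the direction `u` by the factor `s` has determinant `s`
and moves every point of the ball `B(w, 1/16)` by at most `1/16`, so it maps this ball into
`B(w, 1/8)`, which lies in the annulus `3/4 ≤ ‖x‖ ≤ 1`, and into the slab `|⟪x, u⟫| ≤ s/16`.
Hence the event has Lebesgue measure at least `s · vol B(0, 1/16)`, and one may take
`c = vol B(0, 1/16) / vol B(0, 1)`.
-/

open MeasureTheory Metric Module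
open scoped RealInnerProductSpace

theorem ball_subset_closedBall_diff_ball {E : Type*} [SeminormedAddCommGroup E] (w : E) (ρ : ℝ) :
    ball w ρ ⊆ closedBall 0 (‖w‖ + ρ) \ ball 0 (‖w‖ - ρ) := by
  intro x hx
  rw [mem_ball, dist_eq_norm] at hx
  rw [Set.mem_sdiff, mem_closedBall_zero_iff, mem_ball_zero_iff, not_lt]
  constructor <;> linarith [norm_sub_norm_le x w, norm_sub_norm_le w x, norm_sub_rev w x]

section Compression

variable {E : Type*} [NormedAddCommGroup E] [InnerProductSpace ℝ E]

theorem exists_norm_eq_inner_eq_zero [FiniteDimensional ℝ E] (hE : 2 ≤ finrank ℝ E) (u : E)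
    {r : ℝ} (hr : 0 ≤ r) : ∃ w : E, ‖w‖ = r ∧ ⟪w, u⟫ = 0 := by
  have hK : (ℝ ∙ u)ᗮ ≠ ⊥ := by
    rw [Ne, ← Submodule.finrank_eq_zero]
    have hsum := (ℝ ∙ u).finrank_add_finrank_orthogonal
    have hspan := finrank_span_le_card (R := ℝ) ({u} : Set E)
    simp only [Set.toFinset_singleton, Finset.card_singleton] at hspan
    omega
  obtain ⟨v, hv, hv₀⟩ := Submodule.exists_mem_ne_zero_of_ne_bot hK
  refine ⟨(r / ‖v‖) • v, ?_, ?_⟩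
  · rw [norm_smul, Real.norm_of_nonneg (by positivity),
      div_mul_cancel₀ _ (norm_ne_zero_iff.mpr hv₀)]
  · rw [inner_smul_left, Submodule.mem_orthogonal_singleton_iff_inner_left.mp hv, mul_zero]

noncomputable def compressAlong (u : E) (s : ℝ) : E →ₗ[ℝ] E :=
  LinearMap.id - ((1 - s) • innerₛₗ ℝ u).smulRight u

variable {u : E} {s : ℝ}

theorem compressAlong_apply (x : E) : compressAlong u s x = x - ((1 - s) * ⟪u, x⟫) • u := rfl

theorem inner_compressAlong (hu : ‖u‖ = 1) (x : E) :
    ⟪compressAlong u s x, u⟫ = s * ⟪x, u⟫ := by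
  rw [compressAlong_apply, inner_sub_left, inner_smul_left, real_inner_self_eq_norm_sq, hu,
    real_inner_comm, RCLike.conj_to_real]
  ring

theorem det_compressAlong [FiniteDimensional ℝ E] (hu : ‖u‖ = 1) :
    LinearMap.det (compressAlong u s) = s := by
  let b := stdOrthonormalBasis ℝ E
  have hmat : LinearMap.toMatrix b.toBasis b.toBasis (compressAlong u s) =
      1 + Matrix.replicateCol Unit (fun i => -(1 - s) * b.repr u i)
        * Matrix.replicateRow Unit (fun j => b.repr u j) := by
    ext i j
    simp [LinearMap.toMatrix_apply, compressAlong_apply, Matrix.one_apply, Matrix.mul_apply,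
      b.repr_apply_apply, real_inner_comm]
    ring
  have hparseval : ∑ i, b.repr u i * b.repr u i = 1 := by
    simpa [b.repr_apply_apply, real_inner_comm, hu] using b.sum_inner_mul_inner u u
  rw [← LinearMap.det_toMatrix b.toBasis, hmat, Matrix.det_one_add_replicateCol_mul_replicateRow]
  simp only [dotProduct, mul_left_comm _ (-(1 - s)), ← Finset.mul_sum, hparseval]
  ring

theorem compressAlong_image_ball_subset (hu : ‖u‖ = 1) (hs₀ : 0 ≤ s) (hs₁ : s ≤ 1) {w : E}
    (hwu : ⟪w, u⟫ = 0) (ρ : ℝ) :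
    compressAlong u s '' ball w ρ ⊆ ball w (2 * ρ) ∩ {x | |⟪x, u⟫| ≤ s * ρ} := by
  rintro _ ⟨y, hy, rfl⟩
  rw [mem_ball, dist_eq_norm] at hy
  have hyu : |⟪y, u⟫| ≤ ρ := calc
    |⟪y, u⟫| = |⟪y - w, u⟫| := by rw [inner_sub_left, hwu, sub_zero]
    _ ≤ ‖y - w‖ := by simpa [hu] using abs_real_inner_le_norm (y - w) u
    _ ≤ ρ := hy.le
  have hmove : ‖compressAlong u s y - y‖ ≤ ρ := by
    rw [compressAlong_apply, sub_sub_cancel_left, norm_neg, norm_smul, hu, mul_one,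
      Real.norm_eq_abs, abs_mul, abs_of_nonneg (by linarith : 0 ≤ 1 - s), real_inner_comm]
    nlinarith [abs_nonneg ⟪y, u⟫]
  refine ⟨?_, ?_⟩
  · rw [mem_ball, dist_eq_norm]
    linarith [norm_sub_le_norm_sub_add_norm_sub (compressAlong u s y) y w]
  · rw [Set.mem_ofPred_eq, inner_compressAlong hu, abs_mul, abs_of_nonneg hs₀]
    exact mul_le_mul_of_nonneg_left hyu hs₀

theorem le_addHaar_slab_inter_annulus [FiniteDimensional ℝ E] [MeasurableSpace E] [BorelSpace E]
    (μ : Measure E) [μ.IsAddHaarMeasure] (hE : 2 ≤ finrank ℝ E) (hu : ‖u‖ = 1) (hs₀ : 0 ≤ s)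
    (hs₁ : s ≤ 1) {t : ℝ} (hst : s ≤ 8 * t) :
    ENNReal.ofReal s * μ (ball 0 (1 / 16)) ≤
      μ ({x | 3 / 4 ≤ ‖x‖ ∧ |⟪x, u⟫| ≤ t} ∩ closedBall 0 1) := by
  obtain ⟨w, hw, hwu⟩ := exists_norm_eq_inner_eq_zero hE u (by norm_num : (0 : ℝ) ≤ 7 / 8)
  have hsub : compressAlong u s '' ball w (1 / 16) ⊆
      {x | 3 / 4 ≤ ‖x‖ ∧ |⟪x, u⟫| ≤ t} ∩ closedBall 0 1 := by
    intro x hx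
    obtain ⟨hxw, hxu : |⟪x, u⟫| ≤ s * (1 / 16)⟩ :=
      compressAlong_image_ball_subset hu hs₀ hs₁ hwu _ hx
    obtain ⟨hx₁, hx₃₄⟩ := ball_subset_closedBall_diff_ball w _ hxw
    rw [mem_closedBall_zero_iff, hw] at hx₁
    rw [mem_ball_zero_iff, hw, not_lt] at hx₃₄
    exact ⟨⟨by linarith, by linarith⟩,
      mem_closedBall_zero_iff.mpr (by linarith)⟩
  calc ENNReal.ofReal s * μ (ball 0 (1 / 16))
      = μ (compressAlong u s '' ball w (1 / 16)) := by
        rw [Measure.addHaar_image_linearMap, det_compressAlong hu, abs_of_nonneg hs₀,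
          Measure.addHaar_ball_center μ w]
    _ ≤ _ := measure_mono hsub

end Compression

theorem uniform_slab_probability (d : ℕ) (hd : 2 ≤ d) :
    ∃ c : ℝ, 0 < c ∧
      ∀ δ : EuclideanSpace ℝ (Fin d), 1 ≤ ‖δ‖ →
        ENNReal.ofReal (c / ‖δ‖) ≤
          ((volume (Metric.closedBall (0 : EuclideanSpace ℝ (Fin d)) 1))⁻¹ •
              volume.restrict (Metric.closedBall (0 : EuclideanSpace ℝ (Fin d)) 1))
            {x : EuclideanSpace ℝ (Fin d) |
              3 / 4 ≤ ‖x‖ ∧ abs ⟪x, ‖δ‖⁻¹ • δ⟫ ≤ 1 / (8 * ‖δ‖)} := by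
  set B := closedBall (0 : EuclideanSpace ℝ (Fin d)) 1
  set v := volume (ball (0 : EuclideanSpace ℝ (Fin d)) (1 / 16))
  set r := v / volume B with hr_def
  have hr : r ≠ ⊤ :=
    ENNReal.div_ne_top measure_ball_lt_top.ne (measure_closedBall_pos _ _ one_pos).ne'
  have hr₀ : r ≠ 0 := (ENNReal.div_pos
    (measure_ball_pos _ _ (by norm_num : (0 : ℝ) < 1 / 16)).ne' measure_closedBall_lt_top.ne).ne'
  refine ⟨r.toReal, ENNReal.toReal_pos hr₀ hr, fun δ hδ => ?_⟩
  have hδ₀ : 0 < ‖δ‖ := one_pos.trans_le hδ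
  have hu : ‖‖δ‖⁻¹ • δ‖ = 1 := by rw [norm_smul, norm_inv, norm_norm, inv_mul_cancel₀ hδ₀.ne']
  calc ENNReal.ofReal (r.toReal / ‖δ‖)
      = (volume B)⁻¹ * (ENNReal.ofReal ‖δ‖⁻¹ * v) := by
        rw [div_eq_mul_inv, ENNReal.ofReal_mul ENNReal.toReal_nonneg, ENNReal.ofReal_toReal hr,
          hr_def, ENNReal.div_eq_inv_mul]
        ring
    _ ≤ (volume B)⁻¹ * volume ({x | 3 / 4 ≤ ‖x‖ ∧ |⟪x, ‖δ‖⁻¹ • δ⟫| ≤ 1 / (8 * ‖δ‖)} ∩ B) := by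
        gcongr
        refine le_addHaar_slab_inter_annulus volume (by simpa using hd) hu (by positivity)
          (inv_le_one_of_one_le₀ hδ) (le_of_eq ?_)
        field_simp
    _ ≤ _ := by
        rw [Measure.smul_apply, smul_eq_mul]
        exact mul_le_mul_right (Measure.le_restrict_apply _ _) _
end

section
/- Let B_1, B_2 ∈ ℝ^d, V ∈ ℝ^d, and suppose V is assigned to one of the two bins according to the rule: assign V to bin 1 if ⟨V, B_1⟩ ≤ ⟨V, B_2⟩, else to bin 2. Writing A = ‖B_1 − B_2‖² and A' for the squared distance after the update, one has A' = A + ‖V‖² − 2‖B_1 − B_2‖·|⟨V, e⟩| where e is the unit vector along B_1 − B_2 (taken to be 0 if B_1 = B_2). In particular A' ≤ A + ‖V‖². -/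
open scoped RealInnerProductSpace

theorem two_bin_step (d : ℕ) (B₁ B₂ V : EuclideanSpace ℝ (Fin d))
    (B₁' B₂' : EuclideanSpace ℝ (Fin d))
    (hB₁' : B₁' = if ⟪V, B₁⟫ ≤ ⟪V, B₂⟫ then B₁ + V else B₁)
    (hB₂' : B₂' = if ⟪V, B₁⟫ ≤ ⟪V, B₂⟫ then B₂ else B₂ + V) :
    ‖B₁' - B₂'‖ ^ 2 =
        ‖B₁ - B₂‖ ^ 2 + ‖V‖ ^ 2 -
          2 * ‖B₁ - B₂‖ * abs ⟪V, ‖B₁ - B₂‖⁻¹ • (B₁ - B₂)⟫ ∧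
      ‖B₁' - B₂'‖ ^ 2 ≤ ‖B₁ - B₂‖ ^ 2 + ‖V‖ ^ 2 := by
  set D := B₁ - B₂ with hD
  have hinner : ⟪V, ‖D‖⁻¹ • D⟫ = ‖D‖⁻¹ * ⟪V, D⟫ := real_inner_smul_right V D _
  have key : ‖D‖ * |⟪V, ‖D‖⁻¹ • D⟫| = |⟪V, D⟫| := by
    rcases eq_or_ne D 0 with h0 | h0
    · simp [h0]
    · rw [hinner, abs_mul, abs_inv, abs_of_nonneg (norm_nonneg D), ← mul_assoc,
        mul_inv_cancel₀ (norm_ne_zero_iff.mpr h0), one_mul]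
  have hdiff : ⟪V, B₂⟫ - ⟪V, B₁⟫ = -⟪V, D⟫ := by
    rw [hD, inner_sub_right]; ring
  have expand_add : ‖D + V‖ ^ 2 = ‖D‖ ^ 2 + ‖V‖ ^ 2 + 2 * ⟪V, D⟫ := by
    rw [← real_inner_self_eq_norm_sq, ← real_inner_self_eq_norm_sq,
      ← real_inner_self_eq_norm_sq, inner_add_add_self, real_inner_comm D V]
    ring
  have expand_sub : ‖D - V‖ ^ 2 = ‖D‖ ^ 2 + ‖V‖ ^ 2 - 2 * ⟪V, D⟫ := by
    rw [← real_inner_self_eq_norm_sq, ← real_inner_self_eq_norm_sq,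
      ← real_inner_self_eq_norm_sq, inner_sub_sub_self, real_inner_comm D V]
    ring
  by_cases hc : ⟪V, B₁⟫ ≤ ⟪V, B₂⟫
  · have hle : ⟪V, D⟫ ≤ 0 := by
      have := sub_nonneg.mpr hc; rw [hdiff] at this; linarith
    have hdiff' : B₁' - B₂' = D + V := by
      rw [hB₁', hB₂', if_pos hc, if_pos hc, hD]; abel
    have habs : |⟪V, D⟫| = -⟪V, D⟫ := abs_of_nonpos hle
    constructor
    · rw [hdiff', expand_add, mul_assoc, key, habs]; ring
    · rw [hdiff', expand_add]; linarith
  · have hgt : 0 < ⟪V, D⟫ := by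
      have h1 := lt_of_not_ge hc
      have h2 : ⟪V, B₂⟫ - ⟪V, B₁⟫ < 0 := by linarith
      rw [hdiff] at h2; linarith
    have hdiff' : B₁' - B₂' = D - V := by
      rw [hB₁', hB₂', if_neg hc, if_neg hc, hD]; abel
    have habs : |⟪V, D⟫| = ⟪V, D⟫ := abs_of_pos hgt
    constructor
    · rw [hdiff', expand_sub, mul_assoc, key, habs]
    · rw [hdiff', expand_sub]; linarith
end
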